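/- Under the gauge transformation δT_{αβγ} = ∂_α α_{βγ} - ∂_β α_{αγ} - 2∂_γ α_{αβ} with α antisymmetric (α_{αβ} = -α_{βα}), the field strength F_{αβγδ} = 3∂_{[α}T_{βγ]δ} transforms as δF_{αβγδ} = -2∂_δ ∂_{[α}α_{βγ]}·3, i.e. δF_{αβγδ} = -6 ∂_δ ∂_{[α}α_{βγ]}; in particular F is not invariant unless ∂_{[α}α_{βγ]} is constant in δ-direction, but the curvature E_{αβγ,εδ} := (1/2)(∂_ε F_{αβγδ} - ∂_δ F_{αβγε}) is invariant under this transformation. -/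

import Mathlib

/-!
Expanding `δT`, the cyclic sum over `(α, β, γ)` of `∂_α δT_{βγδ}` consists of the terms
`∂_α ∂_β a_{γδ} - ∂_α ∂_γ a_{βδ}`, which cancel in pairs because partial derivatives commute,
and `-2 ∂_α ∂_δ a_{βγ}`. Hence `δF_{αβγδ} = -2 ∂_δ (∂_α a_{βγ} + ∂_β a_{γα} + ∂_γ a_{αβ})`, and the
bracket is `3 ∂_{[α} a_{βγ]}` by antisymmetry of `a`. Being a gradient in `δ`, `δF` has vanishing
curl `δE`.
-/

open scoped BigOperators

/-- Partial derivative in the μ-th coordinate direction on ℝ^D. -/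
noncomputable def pd {D : ℕ} (μ : Fin D) (f : (Fin D → ℝ) → ℝ) : (Fin D → ℝ) → ℝ :=
  fun x => fderiv ℝ f x (Pi.single μ 1)

/-- Weight-one antisymmetrization over three indices. -/
noncomputable def alt3 {D : ℕ} (f : Fin D → Fin D → Fin D → ℝ) (a b c : Fin D) : ℝ :=
  (1/6) * (f a b c - f b a c + f b c a - f c b a + f c a b - f a c b)

/-- Weight-one antisymmetrization over four indices. -/
noncomputable def alt4 {D : ℕ} (f : Fin D → Fin D → Fin D → Fin D → ℝ)
    (a b c d : Fin D) : ℝ :=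
  (1/24) * ∑ σ : Equiv.Perm (Fin 4),
    ((Equiv.Perm.sign σ : ℤ) : ℝ) *
      f (![a,b,c,d] (σ 0)) (![a,b,c,d] (σ 1)) (![a,b,c,d] (σ 2)) (![a,b,c,d] (σ 3))

/-- Minkowski metric (mostly plus) on ℝ^D; numerically equal to its inverse. -/
noncomputable def eta (D : ℕ) : Fin D → Fin D → ℝ := fun μ ν =>
  if μ = ν then (if (μ : ℕ) = 0 then -1 else 1) else 0

section pd

variable {D : ℕ} {f g : (Fin D → ℝ) → ℝ} {x : Fin D → ℝ}

theorem pd_add (hf : DifferentiableAt ℝ f x) (hg : DifferentiableAt ℝ g x) (μ : Fin D) :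
    pd μ (fun y => f y + g y) x = pd μ f x + pd μ g x := by
  simp [pd, fderiv_fun_add hf hg]

theorem pd_sub (hf : DifferentiableAt ℝ f x) (hg : DifferentiableAt ℝ g x) (μ : Fin D) :
    pd μ (fun y => f y - g y) x = pd μ f x - pd μ g x := by
  simp [pd, fderiv_fun_sub hf hg]

theorem pd_const_mul (hf : DifferentiableAt ℝ f x) (c : ℝ) (μ : Fin D) :
    pd μ (fun y => c * f y) x = c * pd μ f x := by
  simp [pd, fderiv_const_mul hf c]

theorem pd_neg (f : (Fin D → ℝ) → ℝ) (μ : Fin D) :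
    pd μ (fun y => -f y) = fun x => -pd μ f x := by
  ext x
  simp [pd]

theorem ContDiff.pd {m n : WithTop ℕ∞} (hf : ContDiff ℝ n f) (hmn : m + 1 ≤ n) (μ : Fin D) :
    ContDiff ℝ m (pd μ f) :=
  (hf.fderiv_right hmn).clm_apply contDiff_const

theorem pd_comm (hf : ContDiff ℝ 2 f) (μ ν : Fin D) : pd μ (pd ν f) = pd ν (pd μ f) := by
  ext x
  have hf' : Differentiable ℝ (fderiv ℝ f) :=
    (hf.fderiv_right (m := 1) le_rfl).differentiable one_ne_zero
  have hsnd (v w : Fin D → ℝ) :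
      fderiv ℝ (fun y => fderiv ℝ f y v) x w = fderiv ℝ (fderiv ℝ f) x w v := by
    simp [fderiv_clm_apply (hf' x) (differentiableAt_const v)]
  have hsymm : IsSymmSndFDerivAt ℝ f x :=
    hf.contDiffAt.isSymmSndFDerivAt (by simp [minSmoothness_of_isRCLikeNormedField])
  exact (hsnd _ _).trans ((hsymm _ _).trans (hsnd _ _).symm)

theorem pd_const_mul_pd_comm (hf : ContDiff ℝ 2 f) (c : ℝ) (μ ν : Fin D) :
    pd μ (fun y => c * pd ν f y) x = pd ν (fun y => c * pd μ f y) x := by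
  have hpd (κ : Fin D) : Differentiable ℝ (pd κ f) :=
    (hf.pd (m := 1) le_rfl κ).differentiable one_ne_zero
  rw [pd_const_mul (hpd ν x), pd_const_mul (hpd μ x), pd_comm hf]

end pd

def cyclicSum3 {D : ℕ} (f : Fin D → Fin D → Fin D → ℝ) (α β γ : Fin D) : ℝ :=
  f α β γ + f β γ α + f γ α β

theorem alt3_eq_inv_three_mul_cyclicSum3 {D : ℕ} {f : Fin D → Fin D → Fin D → ℝ}
    (hf : ∀ p q r, f p q r = -f p r q) (α β γ : Fin D) :
    alt3 f α β γ = 3⁻¹ * cyclicSum3 f α β γ := by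
  rw [alt3, cyclicSum3, hf β α γ, hf γ β α, hf α γ β]
  ring

section gauge

variable {D : ℕ} {a : (Fin D → ℝ) → Fin D → Fin D → ℝ}

/-- `3 ∂_{[α} a_{βγ]}` when `a` is antisymmetric. -/
noncomputable def cyclicGrad (a : (Fin D → ℝ) → Fin D → Fin D → ℝ) (α β γ : Fin D)
    (y : Fin D → ℝ) : ℝ :=
  cyclicSum3 (fun p q r => pd p (fun z => a z q r) y) α β γ

theorem ContDiff.cyclicGrad {n : WithTop ℕ∞} (ha : ∀ q r, ContDiff ℝ (n + 1) (fun x => a x q r))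
    (α β γ : Fin D) : ContDiff ℝ n (cyclicGrad a α β γ) :=
  (((ha β γ).pd le_rfl α).add ((ha γ α).pd le_rfl β)).add ((ha α β).pd le_rfl γ)

theorem alt3_pd_eq_cyclicGrad (ha : ∀ x q r, a x q r = -a x r q) (α β γ : Fin D)
    (y : Fin D → ℝ) :
    alt3 (fun p q r => pd p (fun z => a z q r) y) α β γ = 3⁻¹ * cyclicGrad a α β γ y := by
  refine alt3_eq_inv_three_mul_cyclicSum3 (fun p q r => ?_) α β γ
  rw [funext fun z => ha z q r, pd_neg]

theorem cyclicSum3_pd_eq_neg_two_mul_pd_cyclicGrad (ha : ∀ q r, ContDiff ℝ 2 (fun x => a x q r))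
    {δT : (Fin D → ℝ) → Fin D → Fin D → Fin D → ℝ}
    (hδT : ∀ x α β γ, δT x α β γ =
      pd α (fun y => a y β γ) x - pd β (fun y => a y α γ) x
        - 2 * pd γ (fun y => a y α β) x)
    (α β γ δ : Fin D) (x : Fin D → ℝ) :
    cyclicSum3 (fun μ p q => pd μ (fun y => δT y p q δ) x) α β γ =
      -2 * pd δ (cyclicGrad a α β γ) x := by
  have hd (p q r : Fin D) : Differentiable ℝ (pd p (fun z => a z q r)) :=
    ((ha q r).pd (m := 1) le_rfl p).differentiable one_ne_zero
  have hsymm (μ ν q r : Fin D) := pd_comm (ha q r) μ ν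
  have hpdδT (μ p q r : Fin D) : pd μ (fun y => δT y p q r) x =
      pd μ (pd p (fun z => a z q r)) x - pd μ (pd q (fun z => a z p r)) x
        - 2 * pd μ (pd r (fun z => a z p q)) x := by
    rw [funext fun y => hδT y p q r, pd_sub ((hd p q r).fun_sub (hd q p r) x)
      (((hd r p q).const_mul 2) x), pd_sub (hd p q r x) (hd q p r x),
      pd_const_mul (hd r p q x)]
  unfold cyclicGrad cyclicSum3
  simp only [hpdδT]
  rw [pd_add ((hd α β γ).fun_add (hd β γ α) x) (hd γ α β x), pd_add (hd α β γ x) (hd β γ α x),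
    hsymm β α γ δ, hsymm γ α β δ, hsymm γ β α δ, hsymm α δ β γ, hsymm β δ γ α, hsymm γ δ α β]
  ring

end gauge

theorem field_strength_variation_under_alpha_gauge_and_curvature_invariance
    {D : ℕ} (a : (Fin D → ℝ) → Fin D → Fin D → ℝ)
    (hasmooth : ∀ α β, ContDiff ℝ (⊤ : ℕ∞) (fun x => a x α β))
    (haanti : ∀ x α β, a x α β = - a x β α)
    (δT : (Fin D → ℝ) → Fin D → Fin D → Fin D → ℝ)
    (hδT : ∀ x α β γ, δT x α β γ =
      pd α (fun y => a y β γ) x - pd β (fun y => a y α γ) x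
        - 2 * pd γ (fun y => a y α β) x)
    (δF : (Fin D → ℝ) → Fin D → Fin D → Fin D → Fin D → ℝ)
    (hδF : ∀ x α β γ δ, δF x α β γ δ =
      pd α (fun y => δT y β γ δ) x + pd β (fun y => δT y γ α δ) x
        + pd γ (fun y => δT y α β δ) x)
    (δE : (Fin D → ℝ) → Fin D → Fin D → Fin D → Fin D → Fin D → ℝ)
    (hδE : ∀ x α β γ ε δ, δE x α β γ ε δ =
      (1/2) * (pd ε (fun y => δF y α β γ δ) x - pd δ (fun y => δF y α β γ ε) x)) :
    (∀ x α β γ δ, δF x α β γ δ =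
      -6 * pd δ (fun y => alt3 (fun p q r => pd p (fun z => a z q r) y) α β γ) x)
    ∧ (∀ x α β γ ε δ, δE x α β γ ε δ = 0) := by
  have hC3 (q r : Fin D) : ContDiff ℝ (2 + 1) (fun x => a x q r) :=
    (hasmooth q r).of_le (WithTop.coe_le_coe.mpr le_top)
  have hδF_eq (x : Fin D → ℝ) (α β γ δ : Fin D) :
      δF x α β γ δ = -2 * pd δ (cyclicGrad a α β γ) x := by
    rw [hδF]
    exact cyclicSum3_pd_eq_neg_two_mul_pd_cyclicGrad (fun q r => (hC3 q r).of_le le_self_add)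
      hδT α β γ δ x
  refine ⟨fun x α β γ δ => ?_, fun x α β γ ε δ => ?_⟩
  · simp only [alt3_pd_eq_cyclicGrad haanti]
    rw [pd_const_mul (((ContDiff.cyclicGrad hC3 α β γ).differentiable two_ne_zero) x), hδF_eq]
    ring
  · rw [hδE, funext (hδF_eq · α β γ δ), funext (hδF_eq · α β γ ε),
      pd_const_mul_pd_comm (ContDiff.cyclicGrad hC3 α β γ), sub_self, mul_zero]
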